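/- For p, q > 1, the generalized sine function sin_{p,q}, defined as the inverse of arcsin_{p,q}(x) = ∫_0^x (1-t^q)^(-1/p) dt on [0,1], is geometrically concave on (0, π_{p,q}/2): for all r, s ∈ (0, π_{p,q}/2) and λ ∈ [0,1], sin_{p,q}(r^λ s^(1-λ)) ≥ sin_{p,q}(r)^λ · sin_{p,q}(s)^(1-λ), where π_{p,q}/2 = ∫_0^1 (1-t^q)^(-1/p) dt. -/

import Mathlib

/-!
Let `F x = ∫₀ˣ f` with `f t = (1 - t ^ q) ^ (-1/p)`. Since `sin_{p,q}` is the increasing inverse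
of `F`, its geometric concavity amounts to geometric convexity of `F` on `(0, 1]`. The integrand is
geometrically convex on `(0, 1)`: two weighted AM-GM inequalities give
`(1 - A) ^ λ (1 - B) ^ (1 - λ) ≤ 1 - A ^ λ B ^ (1 - λ)`, and `t ↦ t ^ (-1/p)` is decreasing.
Geometric convexity passes to the primitive: the substitution `t = x u` gives
`F x = x ∫₀¹ f (x u) du`, and Hölder's inequality with exponents `1/λ`, `1/(1-λ)` bounds the
integral at `x ^ λ y ^ (1 - λ)`.
-/

open Real Set intervalIntegral MeasureTheory

theorem geom_mean_le_of_le {u v c l : ℝ} (hu : 0 ≤ u) (hv : 0 ≤ v) (huc : u ≤ c)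
    (hvc : v ≤ c) (hl : l ∈ Icc (0 : ℝ) 1) : u ^ l * v ^ (1 - l) ≤ c := by
  have := geom_mean_le_arith_mean2_weighted hl.1 (sub_nonneg.2 hl.2) hu hv (by ring)
  nlinarith [hl.1, hl.2]

theorem geom_mean_rpow {x y : ℝ} (hx : 0 ≤ x) (hy : 0 ≤ y) (l m c : ℝ) :
    (x ^ l * y ^ m) ^ c = (x ^ c) ^ l * (y ^ c) ^ m := by
  rw [mul_rpow (rpow_nonneg hx _) (rpow_nonneg hy _), ← rpow_mul hx, ← rpow_mul hy,
    ← rpow_mul hx, ← rpow_mul hy, mul_comm l, mul_comm m]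

theorem geom_mean_one_sub_le_one_sub_geom_mean {A B l : ℝ} (hA : A ∈ Icc (0 : ℝ) 1)
    (hB : B ∈ Icc (0 : ℝ) 1) (hl : l ∈ Icc (0 : ℝ) 1) :
    (1 - A) ^ l * (1 - B) ^ (1 - l) ≤ 1 - A ^ l * B ^ (1 - l) := by
  have h₁ := geom_mean_le_arith_mean2_weighted hl.1 (sub_nonneg.2 hl.2) hA.1 hB.1 (by ring)
  have h₂ := geom_mean_le_arith_mean2_weighted hl.1 (sub_nonneg.2 hl.2)
    (sub_nonneg.2 hA.2) (sub_nonneg.2 hB.2) (by ring)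
  linarith

def GeomConvexOn (s : Set ℝ) (f : ℝ → ℝ) : Prop :=
  ∀ x ∈ s, ∀ y ∈ s, ∀ l ∈ Icc (0 : ℝ) 1, f (x ^ l * y ^ (1 - l)) ≤ f x ^ l * f y ^ (1 - l)

theorem geomConvexOn_one_sub_rpow_rpow {q c : ℝ} (hq : 0 < q) (hc : c ≤ 0) :
    GeomConvexOn (Ioo 0 1) (fun t => (1 - t ^ q) ^ c) := by
  intro x hx y hy l hl
  have hxq : x ^ q ∈ Ioo (0 : ℝ) 1 := ⟨rpow_pos_of_pos hx.1 q, rpow_lt_one hx.1.le hx.2 hq⟩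
  have hyq : y ^ q ∈ Ioo (0 : ℝ) 1 := ⟨rpow_pos_of_pos hy.1 q, rpow_lt_one hy.1.le hy.2 hq⟩
  have hG : 0 < (1 - x ^ q) ^ l * (1 - y ^ q) ^ (1 - l) := by
    have := sub_pos.2 hxq.2; have := sub_pos.2 hyq.2; positivity
  calc (1 - (x ^ l * y ^ (1 - l)) ^ q) ^ c
      = (1 - (x ^ q) ^ l * (y ^ q) ^ (1 - l)) ^ c := by rw [geom_mean_rpow hx.1.le hy.1.le]
    _ ≤ ((1 - x ^ q) ^ l * (1 - y ^ q) ^ (1 - l)) ^ c :=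
        rpow_le_rpow_of_nonpos hG (geom_mean_one_sub_le_one_sub_geom_mean
          (Ioo_subset_Icc_self hxq) (Ioo_subset_Icc_self hyq) hl) hc
    _ = ((1 - x ^ q) ^ c) ^ l * ((1 - y ^ q) ^ c) ^ (1 - l) :=
        geom_mean_rpow (sub_pos.2 hxq.2).le (sub_pos.2 hyq.2).le _ _ _

section Holder

variable {α : Type*} [MeasurableSpace α] {μ : Measure α} {f g : α → ℝ} {p q : ℝ}

theorem MeasureTheory.Integrable.rpow_mul_rpow (hf₀ : 0 ≤ᵐ[μ] f) (hg₀ : 0 ≤ᵐ[μ] g)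
    (hf : Integrable f μ) (hg : Integrable g μ) (hp : 0 ≤ p) (hq : 0 ≤ q) (hpq : p + q = 1) :
    Integrable (fun a => f a ^ p * g a ^ q) μ := by
  refine ((hf.const_mul p).add (hg.const_mul q)).mono'
    ((hf.1.aemeasurable.pow_const p).mul (hg.1.aemeasurable.pow_const q)).aestronglyMeasurable ?_
  filter_upwards [hf₀, hg₀] with a ha hb
  rw [Real.norm_of_nonneg (mul_nonneg (rpow_nonneg ha p) (rpow_nonneg hb q))]
  exact geom_mean_le_arith_mean2_weighted hp hq ha hb hpq

theorem integral_rpow_mul_rpow_le (hf₀ : 0 ≤ᵐ[μ] f) (hg₀ : 0 ≤ᵐ[μ] g) (hf : Integrable f μ)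
    (hg : Integrable g μ) (hp : 0 ≤ p) (hq : 0 ≤ q) (hpq : p + q = 1) :
    ∫ a, f a ^ p * g a ^ q ∂μ ≤ (∫ a, f a ∂μ) ^ p * (∫ a, g a ∂μ) ^ q := by
  have hfg₀ : 0 ≤ᵐ[μ] fun a => f a ^ p * g a ^ q := by
    filter_upwards [hf₀, hg₀] with a ha hb
    exact mul_nonneg (rpow_nonneg ha p) (rpow_nonneg hb q)
  rw [integral_eq_lintegral_of_nonneg_ae hfg₀ (hf.rpow_mul_rpow hf₀ hg₀ hg hp hq hpq).1,
    integral_eq_lintegral_of_nonneg_ae hf₀ hf.1, integral_eq_lintegral_of_nonneg_ae hg₀ hg.1,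
    ENNReal.toReal_rpow, ENNReal.toReal_rpow, ← ENNReal.toReal_mul]
  refine ENNReal.toReal_mono (ENNReal.mul_ne_top
    (ENNReal.rpow_ne_top_of_nonneg hp hf.lintegral_lt_top.ne)
    (ENNReal.rpow_ne_top_of_nonneg hq hg.lintegral_lt_top.ne)) ?_
  calc ∫⁻ a, ENNReal.ofReal (f a ^ p * g a ^ q) ∂μ
      = ∫⁻ a, ENNReal.ofReal (f a) ^ p * ENNReal.ofReal (g a) ^ q ∂μ := by
        refine lintegral_congr_ae ?_
        filter_upwards [hf₀, hg₀] with a ha hb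
        rw [ENNReal.ofReal_mul (rpow_nonneg ha p), ENNReal.ofReal_rpow_of_nonneg ha hp,
          ENNReal.ofReal_rpow_of_nonneg hb hq]
    _ ≤ _ := ENNReal.lintegral_mul_norm_pow_le hf.1.aemeasurable.ennreal_ofReal
        hg.1.aemeasurable.ennreal_ofReal hp hq hpq

end Holder

theorem GeomConvexOn.primitive {f : ℝ → ℝ} {b : ℝ} (hf : GeomConvexOn (Ioo 0 b) f)
    (hf₀ : ∀ t ∈ Ioo 0 b, 0 ≤ f t) (hfi : IntervalIntegrable f volume 0 b) :
    GeomConvexOn (Ioc 0 b) (fun x => ∫ t in 0..x, f t) := by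
  intro x hx y hy l hl
  dsimp only
  have hm : x ^ l * y ^ (1 - l) ∈ Ioc 0 b :=
    ⟨mul_pos (rpow_pos_of_pos hx.1 _) (rpow_pos_of_pos hy.1 _),
      geom_mean_le_of_le hx.1.le hy.1.le hx.2 hy.2 hl⟩
  set I : ℝ → ℝ := fun z => ∫ u in Ioo (0 : ℝ) 1, f (z * u)
  have hscale : ∀ z, ∫ t in 0..z, f t = z * I z := fun z => by
    simp only [I]
    rw [← integral_Ioc_eq_integral_Ioo, ← integral_of_le zero_le_one, ← smul_eq_mul,
      smul_integral_comp_mul_left, mul_zero, mul_one]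
  have hmem : ∀ z ∈ Ioc 0 b, ∀ u ∈ Ioo (0 : ℝ) 1, z * u ∈ Ioo 0 b := fun z hz u hu =>
    ⟨mul_pos hz.1 hu.1, by nlinarith [hz.1, hz.2, hu.1, hu.2]⟩
  have hint : ∀ z ∈ Ioc 0 b, IntegrableOn (fun u => f (z * u)) (Ioo 0 1) := fun z hz => by
    have := (hfi.mono_set (uIcc_subset_uIcc left_mem_uIcc
      (Icc_subset_uIcc (Ioc_subset_Icc_self hz)))).comp_mul_left (c := z)
    rw [zero_div, div_self hz.1.ne', intervalIntegrable_iff_integrableOn_Ioc_of_le zero_le_one]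
      at this
    exact this.mono_set Ioo_subset_Ioc_self
  have hnonneg : ∀ z ∈ Ioc 0 b, 0 ≤ᵐ[volume.restrict (Ioo (0 : ℝ) 1)] fun u => f (z * u) :=
    fun z hz => ae_restrict_of_forall_mem measurableSet_Ioo fun u hu => hf₀ _ (hmem z hz u hu)
  have hI : I (x ^ l * y ^ (1 - l)) ≤ I x ^ l * I y ^ (1 - l) := calc
    I (x ^ l * y ^ (1 - l)) ≤ ∫ u in Ioo (0 : ℝ) 1, f (x * u) ^ l * f (y * u) ^ (1 - l) := by
      refine setIntegral_mono_on (hint _ hm) ((hint x hx).rpow_mul_rpow (hnonneg x hx)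
        (hnonneg y hy) (hint y hy) hl.1 (sub_nonneg.2 hl.2) (by ring)) measurableSet_Ioo
        fun u hu => ?_
      have hu' : u ^ l * u ^ (1 - l) = u := by rw [← rpow_add hu.1, add_sub_cancel, rpow_one]
      have hmu : x ^ l * y ^ (1 - l) * u = (x * u) ^ l * (y * u) ^ (1 - l) := by
        rw [mul_rpow hx.1.le hu.1.le, mul_rpow hy.1.le hu.1.le]
        linear_combination -(x ^ l * y ^ (1 - l)) * hu'
      rw [hmu]
      exact hf _ (hmem x hx u hu) _ (hmem y hy u hu) l hl
    _ ≤ I x ^ l * I y ^ (1 - l) := integral_rpow_mul_rpow_le (hnonneg x hx) (hnonneg y hy)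
        (hint x hx) (hint y hy) hl.1 (sub_nonneg.2 hl.2) (by ring)
  have hI₀ : ∀ z ∈ Ioc 0 b, 0 ≤ I z := fun z hz => integral_nonneg_of_ae (hnonneg z hz)
  calc ∫ t in 0..x ^ l * y ^ (1 - l), f t
      = x ^ l * y ^ (1 - l) * I (x ^ l * y ^ (1 - l)) := hscale _
    _ ≤ x ^ l * y ^ (1 - l) * (I x ^ l * I y ^ (1 - l)) := mul_le_mul_of_nonneg_left hI hm.1.le
    _ = (x * I x) ^ l * (y * I y) ^ (1 - l) := by
      rw [mul_rpow hx.1.le (hI₀ x hx), mul_rpow hy.1.le (hI₀ y hy)]; ring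
    _ = _ := by rw [hscale x, hscale y]

theorem strictMonoOn_primitive {f : ℝ → ℝ} {a b : ℝ} (hfi : IntervalIntegrable f volume a b)
    (hpos : ∀ t ∈ Ioo a b, 0 < f t) : StrictMonoOn (fun x => ∫ t in a..x, f t) (Icc a b) := by
  intro x hx y hy hxy
  dsimp only
  have hxy' : IntervalIntegrable f volume x y :=
    hfi.mono_set (uIcc_subset_uIcc (Icc_subset_uIcc hx) (Icc_subset_uIcc hy))
  rw [← integral_add_adjacent_intervals
    (hfi.mono_set (uIcc_subset_uIcc left_mem_uIcc (Icc_subset_uIcc hx))) hxy',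
    lt_add_iff_pos_right]
  exact intervalIntegral_pos_of_pos_on hxy'
    (fun t ht => hpos t ⟨hx.1.trans_lt ht.1, ht.2.trans_le hy.2⟩) hxy

theorem StrictMonoOn.monotoneOn_of_leftInvOn {α β : Type*} [ConditionallyCompleteLinearOrder α]
    [DenselyOrdered α] [TopologicalSpace α] [OrderTopology α] [LinearOrder β] [TopologicalSpace β]
    [OrderClosedTopology β] {F : α → β} {S : β → α} {a b : α} (hF : StrictMonoOn F (Icc a b))
    (hFc : ContinuousOn F (Icc a b)) (hS : LeftInvOn S F (Icc a b)) (hab : a ≤ b) :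
    MonotoneOn S (Icc (F a) (F b)) := by
  intro u hu v hv huv
  obtain ⟨x, hx, rfl⟩ := intermediate_value_Icc hab hFc hu
  obtain ⟨y, hy, rfl⟩ := intermediate_value_Icc hab hFc hv
  rw [hS hx, hS hy]
  exact (hF.le_iff_le hx hy).mp huv

theorem intervalIntegrable_one_sub_rpow_rpow {q c : ℝ} (hq : 1 ≤ q) (hc₁ : -1 < c)
    (hc₀ : c ≤ 0) :
    IntervalIntegrable (fun t => (1 - t ^ q) ^ c) volume 0 1 := by
  have hdom : IntervalIntegrable (fun t => (1 - t) ^ c) volume 0 1 := by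
    simpa using ((intervalIntegrable_rpow' (a := 0) (b := 1) hc₁).comp_sub_left 1).symm
  refine hdom.mono_fun'
    (((measurable_id.pow_const q).const_sub 1).pow_const c).aestronglyMeasurable ?_
  rw [uIoc_of_le zero_le_one]
  refine ae_restrict_of_forall_mem measurableSet_Ioc fun t ht => ?_
  have htq : t ^ q ≤ t := rpow_le_self_of_le_one ht.1.le ht.2 hq
  dsimp only
  rw [Real.norm_of_nonneg (rpow_nonneg (sub_nonneg.2 (htq.trans ht.2)) c)]
  rcases ht.2.lt_or_eq with ht1 | rfl
  · exact rpow_le_rpow_of_nonpos (sub_pos.2 ht1) (by linarith) hc₀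
  · simp

theorem sin_pq_geom_concave (p q : ℝ) (hp : 1 < p) (hq : 1 < q) (S : ℝ → ℝ)
    (hS : ∀ x ∈ Set.Icc (0:ℝ) 1,
      S (∫ t in (0:ℝ)..x, (1 - t ^ q) ^ (-1/p)) = x) :
    ∀ r ∈ Set.Ioo (0:ℝ) (∫ t in (0:ℝ)..1, (1 - t ^ q) ^ (-1/p)),
      ∀ s ∈ Set.Ioo (0:ℝ) (∫ t in (0:ℝ)..1, (1 - t ^ q) ^ (-1/p)),
        ∀ l ∈ Set.Icc (0:ℝ) 1,
          S (r ^ l * s ^ (1 - l)) ≥ S r ^ l * S s ^ (1 - l) := by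
  intro r hr s hs l hl
  set F : ℝ → ℝ := fun x => ∫ t in (0:ℝ)..x, (1 - t ^ q) ^ (-1/p)
  have hc₁ : -1 < -1 / p := by rw [neg_div, neg_lt_neg_iff, div_lt_one (by linarith)]; exact hp
  have hc₀ : -1 / p ≤ 0 := div_nonpos_of_nonpos_of_nonneg (by norm_num) (by linarith)
  have hfi := intervalIntegrable_one_sub_rpow_rpow hq.le hc₁ hc₀
  have hpos : ∀ t ∈ Ioo (0:ℝ) 1, 0 < (1 - t ^ q) ^ (-1/p) := fun t ht =>
    rpow_pos_of_pos (sub_pos.2 (rpow_lt_one ht.1.le ht.2 (by linarith))) _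
  have hF_mono : StrictMonoOn F (Icc 0 1) := strictMonoOn_primitive hfi hpos
  have hF_cont : ContinuousOn F (Icc 0 1) := by
    simpa only [uIcc_of_le zero_le_one] using continuousOn_primitive_interval' hfi left_mem_uIcc
  have hF_geom : GeomConvexOn (Ioc 0 1) F :=
    (geomConvexOn_one_sub_rpow_rpow (by linarith) hc₀).primitive (fun t ht => (hpos t ht).le) hfi
  have hS_mono : MonotoneOn S (Icc (F 0) (F 1)) :=
    hF_mono.monotoneOn_of_leftInvOn hF_cont hS zero_le_one
  have hF₀ : F 0 = 0 := integral_same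
  obtain ⟨x, hx, rfl⟩ :=
    intermediate_value_Icc zero_le_one hF_cont ⟨hF₀.symm ▸ hr.1.le, hr.2.le⟩
  obtain ⟨y, hy, rfl⟩ :=
    intermediate_value_Icc zero_le_one hF_cont ⟨hF₀.symm ▸ hs.1.le, hs.2.le⟩
  have hx₀ : 0 < x := hx.1.lt_of_ne <| by rintro rfl; exact hr.1.ne' hF₀
  have hy₀ : 0 < y := hy.1.lt_of_ne <| by rintro rfl; exact hs.1.ne' hF₀
  have hm : x ^ l * y ^ (1 - l) ∈ Icc 0 1 :=
    ⟨by positivity, geom_mean_le_of_le hx.1 hy.1 hx.2 hy.2 hl⟩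
  rw [hS x hx, hS y hy, ge_iff_le, ← hS _ hm]
  refine hS_mono (hF_mono.monotoneOn.mapsTo_Icc hm) ⟨?_, ?_⟩
    (hF_geom x ⟨hx₀, hx.2⟩ y ⟨hy₀, hy.2⟩ l hl)
  · rw [hF₀]; exact mul_nonneg (rpow_nonneg hr.1.le _) (rpow_nonneg hs.1.le _)
  · exact geom_mean_le_of_le hr.1.le hs.1.le hr.2.le hs.2.le hl
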